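/- First Griffiths-type inequality on the Nishimori line: the quenched pressure P({x}) = [ln Z] is differentiable in each parameter x_b and its total derivative (taking into account the dependence of both the Gaussian mean and the potential on x_b) satisfies dP/dx_b = x_b [⟨S_b⟩ + 1], which is nonnegative; in particular P is nondecreasing in each x_b. -/

import Mathlib

open MeasureTheory ProbabilityTheory Filter

noncomputable section

/-- The real value ±1 of a Boolean spin. -/
def spin (s : Bool) : ℝ := if s then 1 else -1

/-- The bond spin `S_b = S_n S_{n'}` for a bond `b` with endpoints `ep b = (n, n')`. -/
def bondSpin {V ι : Type*} (ep : ι → V × V) (S : V → Bool) (b : ι) : ℝ :=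
  spin (S (ep b).1) * spin (S (ep b).2)

/-- The potential `U(j, S) = Σ_b x_b j_b S_b`. -/
def potential {V ι : Type*} [Fintype ι] (ep : ι → V × V) (x j : ι → ℝ)
    (S : V → Bool) : ℝ :=
  ∑ b, x b * j b * bondSpin ep S b

/-- The partition function `Z(j) = Σ_S exp U(j,S)`. -/
def partitionFn {V ι : Type*} [Fintype V] [DecidableEq V] [Fintype ι]
    (ep : ι → V × V) (x j : ι → ℝ) : ℝ :=
  ∑ S : V → Bool, Real.exp (potential ep x j S)

/-- The Boltzmann–Gibbs expectation `⟨f⟩` at fixed disorder `j`. -/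
def gibbs {V ι : Type*} [Fintype V] [DecidableEq V] [Fintype ι]
    (ep : ι → V × V) (x j : ι → ℝ) (f : (V → Bool) → ℝ) : ℝ :=
  (∑ S : V → Bool, f S * Real.exp (potential ep x j S)) / partitionFn ep x j

/-- The law of the couplings: independent Gaussians, `j_b` of mean `x_b` and variance 1. -/
def couplings {ι : Type*} [Fintype ι] (x : ι → ℝ) : Measure (ι → ℝ) :=
  Measure.pi fun b => gaussianReal (x b) 1

/-- The quenched average `[F]`. -/
def quenched {ι : Type*} [Fintype ι] (x : ι → ℝ) (F : (ι → ℝ) → ℝ) : ℝ :=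
  ∫ j, F j ∂(couplings x)

/-- The quenched pressure `P({x}) = [ln Z]`. -/
def pressure {V ι : Type*} [Fintype V] [DecidableEq V] [Fintype ι]
    (ep : ι → V × V) (x : ι → ℝ) : ℝ :=
  quenched x fun j => Real.log (partitionFn ep x j)

/-!
Write `j = g + x` with `g` standard Gaussian, so that `P(x) = E_g log Z(x, g + x)`. Differentiating
under the integral (dominated by `|g_b| + const`) gives `∂P/∂x_b = [(j_b + x_b) ⟨S_b⟩]`.

The gauge transformation `j_c ↦ τ_c j_c`, `S ↦ τ S` leaves `Z` invariant and maps the law of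
mean `x` to that of mean `τ x`. The Cameron–Martin densities of these laws, summed over all gauges
`τ`, add up to `exp (-|x|² / 2) Z(j)`. Hence `[j_b ⟨S_b⟩]` equals the gauge average of
`[τ_b j_b]` under mean `τ x`, which is `x_b` (Nishimori identity). So
`∂P/∂x_b = x_b [⟨S_b⟩ + 1] ≥ 0`, and monotonicity follows from the mean value theorem.
-/

open scoped ENNReal

theorem MeasureTheory.Measure.pi_withDensity {ι α : Type*} [Fintype ι] [MeasurableSpace α]
    {μ : ι → Measure α} [∀ i, IsProbabilityMeasure (μ i)] {f : ι → α → ℝ≥0∞}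
    (hf : ∀ i, Measurable (f i)) [∀ i, SigmaFinite ((μ i).withDensity (f i))] :
    Measure.pi (fun i => (μ i).withDensity (f i))
      = (Measure.pi μ).withDensity fun x => ∏ i, f i (x i) := by
  refine Measure.pi_eq (μ := fun i => (μ i).withDensity (f i)) fun s hs => ?_
  have hbox : (Set.univ.pi s).indicator (fun x => ∏ i, f i (x i))
      = fun x => ∏ i, (s i).indicator (f i) (x i) := by
    ext x
    by_cases hx : x ∈ Set.univ.pi s
    · rw [Set.indicator_of_mem hx]
      exact Finset.prod_congr rfl fun i _ => (Set.indicator_of_mem (hx i trivial) _).symm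
    · obtain ⟨i, hi⟩ : ∃ i, x i ∉ s i := by simpa [Set.mem_univ_pi] using hx
      rw [Set.indicator_of_notMem hx,
        Finset.prod_eq_zero (Finset.mem_univ i) (Set.indicator_of_notMem hi _)]
  rw [withDensity_apply _ (.univ_pi hs), ← lintegral_indicator (.univ_pi hs), hbox,
    lintegral_prod_eq_prod_lintegral_of_indepFun _ _
      (iIndepFun_pi fun i => ((hf i).indicator (hs i)).aemeasurable)
      fun i => ((hf i).indicator (hs i)).comp (measurable_pi_apply i)]
  refine Finset.prod_congr rfl fun i _ => ?_
  rw [withDensity_apply _ (hs i), ← lintegral_indicator (hs i),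
    ← (measurePreserving_eval μ i).lintegral_comp ((hf i).indicator (hs i))]

namespace ProbabilityTheory

theorem gaussianReal_eq_withDensity_exp (m : ℝ) :
    gaussianReal m 1
      = (gaussianReal 0 1).withDensity fun t =>
          ENNReal.ofReal (Real.exp (m * t - m ^ 2 / 2)) := by
  rw [gaussianReal_of_var_ne_zero 0 one_ne_zero, gaussianReal_of_var_ne_zero m one_ne_zero,
    ← withDensity_mul _ (measurable_gaussianPDF 0 1) (by fun_prop)]
  congr 1
  ext t
  rw [Pi.mul_apply, gaussianPDF, gaussianPDF,
    ← ENNReal.ofReal_mul (gaussianPDFReal_nonneg _ _ _), gaussianPDFReal, gaussianPDFReal,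
    mul_assoc _ (Real.exp _), ← Real.exp_add]
  congr 3
  simp only [NNReal.coe_one]
  ring

end ProbabilityTheory

theorem Real.abs_log_sum_exp_le {κ : Type*} [Fintype κ] [Nonempty κ] (u : κ → ℝ) {M : ℝ}
    (hu : ∀ k, |u k| ≤ M) :
    |Real.log (∑ k, Real.exp (u k))| ≤ Real.log (Fintype.card κ) + M := by
  obtain ⟨k₀⟩ := ‹Nonempty κ›
  have hpos : 0 < ∑ k, Real.exp (u k) :=
    Finset.sum_pos (fun _ _ => Real.exp_pos _) Finset.univ_nonempty
  have hcard : 0 ≤ Real.log (Fintype.card κ) :=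
    Real.log_nonneg (Nat.one_le_cast.2 Fintype.card_pos)
  have hlower : Real.exp (-M) ≤ ∑ k, Real.exp (u k) :=
    (Real.exp_le_exp.2 (neg_le_of_abs_le (hu k₀))).trans
      (Finset.single_le_sum (fun k _ => (Real.exp_pos (u k)).le) (Finset.mem_univ k₀))
  have hupper : ∑ k, Real.exp (u k) ≤ Fintype.card κ * Real.exp M := by
    calc _ ≤ ∑ _k : κ, Real.exp M :=
          Finset.sum_le_sum fun k _ => Real.exp_le_exp.2 (le_of_abs_le (hu k))
      _ = _ := by simp
  rw [abs_le]
  constructor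
  · linarith [(Real.le_log_iff_exp_le hpos).2 hlower]
  · calc _ ≤ Real.log (Fintype.card κ * Real.exp M) := Real.log_le_log hpos hupper
      _ = _ := by rw [Real.log_mul (by positivity) (Real.exp_pos _).ne', Real.log_exp]

section Couplings

variable {ι : Type*} [Fintype ι]

instance (x : ι → ℝ) : IsProbabilityMeasure (couplings x) := by
  unfold couplings; infer_instance

def couplingsDensity (y j : ι → ℝ) : ℝ := Real.exp (∑ c, (y c * j c - y c ^ 2 / 2))

theorem couplings_eq_withDensity (y : ι → ℝ) :
    couplings y = (couplings 0).withDensity fun j => ENNReal.ofReal (couplingsDensity y j) := by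
  have hcm : (fun c => gaussianReal (y c) 1) = fun c =>
      (gaussianReal 0 1).withDensity fun t => ENNReal.ofReal (Real.exp (y c * t - y c ^ 2 / 2)) :=
    funext fun c => gaussianReal_eq_withDensity_exp (y c)
  rw [couplings, hcm, Measure.pi_withDensity fun c => by fun_prop]
  congr 1
  ext j
  rw [couplingsDensity, Real.exp_sum,
    ENNReal.ofReal_prod_of_nonneg fun c _ => (Real.exp_pos _).le]

theorem integral_couplings_eq (y : ι → ℝ) (F : (ι → ℝ) → ℝ) :
    ∫ j, F j ∂couplings y = ∫ j, couplingsDensity y j * F j ∂couplings 0 := by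
  rw [couplings_eq_withDensity y, integral_withDensity_eq_integral_toReal_smul
    (by unfold couplingsDensity; fun_prop) (ae_of_all _ fun _ => ENNReal.ofReal_lt_top)]
  simp only [ENNReal.toReal_ofReal (Real.exp_pos _).le, couplingsDensity, smul_eq_mul]

theorem integrable_couplings_iff (y : ι → ℝ) (F : (ι → ℝ) → ℝ) :
    Integrable F (couplings y)
      ↔ Integrable (fun j => couplingsDensity y j * F j) (couplings 0) := by
  rw [couplings_eq_withDensity y, integrable_withDensity_iff_integrable_smul'
    (by unfold couplingsDensity; fun_prop) (ae_of_all _ fun _ => ENNReal.ofReal_lt_top)]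
  simp only [ENNReal.toReal_ofReal (Real.exp_pos _).le, couplingsDensity, smul_eq_mul]

theorem couplings_map_add (y : ι → ℝ) : (couplings 0).map (· + y) = couplings y := by
  change (couplings 0).map (fun g c => g c + y c) = _
  refine (Measure.pi_map_pi (f := fun c (t : ℝ) => t + y c) fun c => by fun_prop).trans ?_
  congr with c : 1
  rw [Pi.zero_apply, gaussianReal_map_add_const, zero_add]

theorem couplings_map_mul {ε : ι → ℝ} (hε : ∀ c, ε c ^ 2 = 1) (y : ι → ℝ) :
    (couplings y).map (fun j c => ε c * j c) = couplings fun c => ε c * y c := by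
  refine (Measure.pi_map_pi (f := fun c (t : ℝ) => ε c * t) fun c => by fun_prop).trans ?_
  congr with c : 1
  rw [gaussianReal_map_const_mul]
  congr
  ext
  simp [hε c]

theorem integral_couplings_eq_integral_add (y : ι → ℝ) {F : (ι → ℝ) → ℝ}
    (hF : AEStronglyMeasurable F (couplings y)) :
    ∫ j, F j ∂couplings y = ∫ g, F (g + y) ∂couplings 0 := by
  rw [← couplings_map_add y] at hF ⊢
  exact integral_map (by fun_prop) hF

theorem integrable_comp_add_couplings {y : ι → ℝ} {F : (ι → ℝ) → ℝ}
    (hF : Integrable F (couplings y)) : Integrable (fun g => F (g + y)) (couplings 0) := by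
  rw [← couplings_map_add y] at hF
  exact hF.comp_measurable (measurable_add_const y)

theorem integral_couplings_map_mul {ε : ι → ℝ} (hε : ∀ c, ε c ^ 2 = 1) (y : ι → ℝ)
    {F : (ι → ℝ) → ℝ} (hF : AEStronglyMeasurable F (couplings fun c => ε c * y c)) :
    ∫ j, F j ∂couplings (fun c => ε c * y c) = ∫ j, F (fun c => ε c * j c) ∂couplings y := by
  rw [← couplings_map_mul hε y] at hF ⊢
  exact integral_map (measurable_pi_lambda _ fun c => by fun_prop).aemeasurable hF

theorem integral_apply_couplings (y : ι → ℝ) (c : ι) : ∫ j, j c ∂couplings y = y c := by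
  rw [couplings, integral_eval, integral_id_gaussianReal]

theorem integrable_apply_couplings (y : ι → ℝ) (c : ι) :
    Integrable (fun j => j c) (couplings y) :=
  integrable_eval ((memLp_id_gaussianReal 1).integrable le_rfl)

end Couplings

section Gibbs

variable {V ι : Type*} (ep : ι → V × V)

theorem abs_bondSpin (S : V → Bool) (b : ι) : |bondSpin ep S b| = 1 := by
  unfold bondSpin spin
  split_ifs <;> norm_num

theorem bondSpin_mul_self (S : V → Bool) (b : ι) : bondSpin ep S b * bondSpin ep S b = 1 := by
  rw [← abs_mul_abs_self, abs_bondSpin, one_mul]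

variable [Fintype V] [DecidableEq V] [Fintype ι]

theorem partitionFn_pos (x j : ι → ℝ) : 0 < partitionFn ep x j :=
  Finset.sum_pos (fun _ _ => Real.exp_pos _) Finset.univ_nonempty

theorem gibbs_nonneg (x j : ι → ℝ) {f : (V → Bool) → ℝ} (hf : ∀ S, 0 ≤ f S) :
    0 ≤ gibbs ep x j f :=
  div_nonneg (Finset.sum_nonneg fun S _ => mul_nonneg (hf S) (Real.exp_pos _).le)
    (partitionFn_pos ep x j).le

theorem abs_gibbs_le (x j : ι → ℝ) {f : (V → Bool) → ℝ} {C : ℝ} (hf : ∀ S, |f S| ≤ C) :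
    |gibbs ep x j f| ≤ C := by
  rw [gibbs, abs_div, abs_of_pos (partitionFn_pos ep x j), div_le_iff₀ (partitionFn_pos ep x j),
    partitionFn, Finset.mul_sum]
  refine (Finset.abs_sum_le_sum_abs _ _).trans (Finset.sum_le_sum fun S _ => ?_)
  rw [abs_mul, Real.abs_exp]
  exact mul_le_mul_of_nonneg_right (hf S) (Real.exp_pos _).le

theorem abs_gibbs_bondSpin_le (x j : ι → ℝ) (b : ι) :
    |gibbs ep x j (bondSpin ep · b)| ≤ 1 :=
  abs_gibbs_le ep x j fun S => (abs_bondSpin ep S b).le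

theorem gibbs_const_mul (x j : ι → ℝ) (a : ℝ) (f : (V → Bool) → ℝ) :
    gibbs ep x j (fun S => a * f S) = a * gibbs ep x j f := by
  simp only [gibbs, mul_assoc, ← Finset.mul_sum, mul_div_assoc]

theorem gibbs_add_one (x j : ι → ℝ) (f : (V → Bool) → ℝ) :
    gibbs ep x j (fun S => f S + 1) = gibbs ep x j f + 1 := by
  simp only [gibbs, add_mul, one_mul, Finset.sum_add_distrib, add_div]
  rw [← partitionFn, div_self (partitionFn_pos ep x j).ne']

theorem continuous_gibbs (x : ι → ℝ) (f : (V → Bool) → ℝ) :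
    Continuous fun j => gibbs ep x j f := by
  refine Continuous.div (by unfold potential; fun_prop)
    (by unfold partitionFn potential; fun_prop) fun j => (partitionFn_pos ep x j).ne'

theorem continuous_log_partitionFn (x : ι → ℝ) :
    Continuous fun j => Real.log (partitionFn ep x j) :=
  Continuous.log (by unfold partitionFn potential; fun_prop) fun j =>
    (partitionFn_pos ep x j).ne'

theorem integrable_gibbs_bondSpin (x y : ι → ℝ) (b : ι) :
    Integrable (fun j => gibbs ep x j (bondSpin ep · b)) (couplings y) :=
  (integrable_const 1).mono' (continuous_gibbs ep x _).aestronglyMeasurable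
    (ae_of_all _ fun j => (Real.norm_eq_abs _).trans_le (abs_gibbs_bondSpin_le ep x j b))

theorem integrable_apply_mul_gibbs_bondSpin (x y : ι → ℝ) (b : ι) :
    Integrable (fun j => j b * gibbs ep x j (bondSpin ep · b)) (couplings y) :=
  (integrable_apply_couplings y b).abs.mono'
    ((continuous_apply b).mul (continuous_gibbs ep x _)).aestronglyMeasurable
    (ae_of_all _ fun j => by
      rw [Real.norm_eq_abs, abs_mul]
      exact mul_le_of_le_one_right (abs_nonneg _) (abs_gibbs_bondSpin_le ep x j b))

end Gibbs

section Gauge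

variable {V ι : Type*} (ep : ι → V × V)

/-- In the `±1` encoding of `spin`, `τ n == S n` is the product `τ_n S_n`. -/
def gaugeConfig (τ S : V → Bool) : V → Bool := fun n => τ n == S n

def gaugeTransform (τ : V → Bool) (j : ι → ℝ) : ι → ℝ := fun c => bondSpin ep τ c * j c

theorem gaugeConfig_involutive (τ : V → Bool) : Function.Involutive (gaugeConfig τ) := by
  intro S
  funext n
  simp only [gaugeConfig]
  cases τ n <;> cases S n <;> rfl

theorem bondSpin_gaugeConfig (τ S : V → Bool) (c : ι) :
    bondSpin ep (gaugeConfig τ S) c = bondSpin ep τ c * bondSpin ep S c := by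
  have spin_beq (a a' : Bool) : spin (a == a') = spin a * spin a' := by
    cases a <;> cases a' <;> norm_num [spin]
  simp only [bondSpin, gaugeConfig, spin_beq]
  ring

variable [Fintype ι]

theorem potential_gaugeTransform (x j : ι → ℝ) (τ S : V → Bool) :
    potential ep x (gaugeTransform ep τ j) S = potential ep x j (gaugeConfig τ S) := by
  simp only [potential, gaugeTransform, bondSpin_gaugeConfig]
  exact Finset.sum_congr rfl fun c _ => by ring

theorem couplingsDensity_gaugeTransform (x j : ι → ℝ) (τ : V → Bool) :
    couplingsDensity (gaugeTransform ep τ x) j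
      = Real.exp (-∑ c, x c ^ 2 / 2) * Real.exp (potential ep x j τ) := by
  rw [couplingsDensity, ← Real.exp_add, potential, ← Finset.sum_neg_distrib,
    ← Finset.sum_add_distrib]
  congr 1
  refine Finset.sum_congr rfl fun c _ => ?_
  have hτ := bondSpin_mul_self ep τ c
  simp only [gaugeTransform]
  linear_combination (-(x c ^ 2) / 2) * hτ

variable [Fintype V] [DecidableEq V]

theorem gibbs_gaugeTransform (x j : ι → ℝ) (τ : V → Bool) (f : (V → Bool) → ℝ) :
    gibbs ep x (gaugeTransform ep τ j) f = gibbs ep x j (f ∘ gaugeConfig τ) := by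
  have hτ := gaugeConfig_involutive τ
  simp only [gibbs, partitionFn, potential_gaugeTransform]
  congr 1 <;> exact Fintype.sum_bijective _ hτ.bijective _ _ fun S => by
    simp only [Function.comp_apply, hτ S]

theorem gibbs_bondSpin_gaugeTransform (x j : ι → ℝ) (τ : V → Bool) (b : ι) :
    gibbs ep x (gaugeTransform ep τ j) (bondSpin ep · b)
      = bondSpin ep τ b * gibbs ep x j (bondSpin ep · b) := by
  rw [gibbs_gaugeTransform, ← gibbs_const_mul]
  simp only [Function.comp_def, bondSpin_gaugeConfig]

theorem sum_couplingsDensity_gaugeTransform_mul (x j : ι → ℝ) (f : (V → Bool) → ℝ) :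
    ∑ τ, couplingsDensity (gaugeTransform ep τ x) j * f τ
      = Real.exp (-∑ c, x c ^ 2 / 2) * ∑ τ, f τ * Real.exp (potential ep x j τ) := by
  simp only [couplingsDensity_gaugeTransform, Finset.mul_sum]
  exact Finset.sum_congr rfl fun τ _ => by ring

/-- The pointwise form of the Nishimori identity. -/
theorem sum_couplingsDensity_gaugeTransform_mul_gibbs (x j : ι → ℝ) (f : (V → Bool) → ℝ) :
    ∑ τ, couplingsDensity (gaugeTransform ep τ x) j * gibbs ep x j f
      = ∑ τ, couplingsDensity (gaugeTransform ep τ x) j * f τ := by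
  have hZ := (partitionFn_pos ep x j).ne'
  have hsum := sum_couplingsDensity_gaugeTransform_mul ep x j fun _ => 1
  simp only [mul_one, one_mul] at hsum
  rw [← Finset.sum_mul, hsum, ← partitionFn, sum_couplingsDensity_gaugeTransform_mul,
    gibbs]
  field_simp

end Gauge

section Nishimori

variable {V ι : Type*} [Fintype ι] (ep : ι → V × V)

theorem integral_couplings_gaugeTransform (x : ι → ℝ) (τ : V → Bool) {F : (ι → ℝ) → ℝ}
    (hF : AEStronglyMeasurable F (couplings (gaugeTransform ep τ x))) :
    ∫ j, F j ∂couplings (gaugeTransform ep τ x)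
      = ∫ j, F (gaugeTransform ep τ j) ∂couplings x :=
  integral_couplings_map_mul (fun c => by rw [sq, bondSpin_mul_self]) x hF

variable [Fintype V] [DecidableEq V]

theorem sum_integral_couplings_gaugeTransform (x : ι → ℝ) {F : (V → Bool) → (ι → ℝ) → ℝ}
    (hF : ∀ τ, Integrable (F τ) (couplings (gaugeTransform ep τ x))) :
    ∑ τ, ∫ j, F τ j ∂couplings (gaugeTransform ep τ x)
      = ∫ j, ∑ τ, couplingsDensity (gaugeTransform ep τ x) j * F τ j ∂couplings 0 := by
  simp_rw [integral_couplings_eq (gaugeTransform ep _ x)]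
  exact (integral_finsetSum _ fun τ _ => (integrable_couplings_iff _ _).1 (hF τ)).symm

theorem integral_apply_mul_gibbs_bondSpin (x : ι → ℝ) (b : ι) :
    ∫ j, j b * gibbs ep x j (bondSpin ep · b) ∂couplings x = x b := by
  set G := fun j : ι → ℝ => j b * gibbs ep x j (bondSpin ep · b) with hG
  have hG_int (y : ι → ℝ) : Integrable G (couplings y) :=
    integrable_apply_mul_gibbs_bondSpin ep x y b
  have hG_gauge (τ : V → Bool) :
      ∫ j, G j ∂couplings (gaugeTransform ep τ x) = ∫ j, G j ∂couplings x := by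
    rw [integral_couplings_gaugeTransform ep x τ (hG_int _).aestronglyMeasurable]
    congr with j
    simp only [hG, gibbs_bondSpin_gaugeTransform, gaugeTransform]
    linear_combination (j b * gibbs ep x j (bondSpin ep · b)) * bondSpin_mul_self ep τ b
  have hpointwise (j : ι → ℝ) :
      ∑ τ, couplingsDensity (gaugeTransform ep τ x) j * G j
        = ∑ τ, couplingsDensity (gaugeTransform ep τ x) j * (bondSpin ep τ b * j b) := by
    calc _ = j b * ∑ τ, couplingsDensity (gaugeTransform ep τ x) j
              * gibbs ep x j (bondSpin ep · b) := by
          rw [Finset.mul_sum]; exact Finset.sum_congr rfl fun _ _ => by ring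
      _ = j b * ∑ τ, couplingsDensity (gaugeTransform ep τ x) j * bondSpin ep τ b := by
          rw [sum_couplingsDensity_gaugeTransform_mul_gibbs]
      _ = _ := by
          rw [Finset.mul_sum]; exact Finset.sum_congr rfl fun _ _ => by ring
  have hcard : (0 : ℝ) < Fintype.card (V → Bool) := Nat.cast_pos.2 Fintype.card_pos
  refine mul_left_cancel₀ hcard.ne' ?_
  calc _ = ∑ τ, ∫ j, G j ∂couplings (gaugeTransform ep τ x) := by
        simp only [hG_gauge, Finset.sum_const, Finset.card_univ, nsmul_eq_mul]
    _ = ∑ τ, ∫ j, bondSpin ep τ b * j b ∂couplings (gaugeTransform ep τ x) := by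
        rw [sum_integral_couplings_gaugeTransform ep x fun _ => hG_int _,
          sum_integral_couplings_gaugeTransform ep x fun τ =>
            (integrable_apply_couplings _ b).const_mul (bondSpin ep τ b)]
        simp only [hpointwise]
    _ = ∑ τ, bondSpin ep τ b * bondSpin ep τ b * x b := by
        simp only [integral_const_mul, integral_apply_couplings, gaugeTransform, mul_assoc]
    _ = _ := by
        simp only [bondSpin_mul_self, one_mul, Finset.sum_const, Finset.card_univ, nsmul_eq_mul]

theorem integral_apply_add_mul_gibbs_bondSpin (x : ι → ℝ) (b : ι) :
    ∫ j, (j b + x b) * gibbs ep x j (bondSpin ep · b) ∂couplings x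
      = x b * quenched x (fun j => gibbs ep x j (fun S => bondSpin ep S b + 1)) := by
  have hint := integrable_gibbs_bondSpin ep x x b
  simp only [add_mul, quenched, gibbs_add_one]
  rw [integral_add (integrable_apply_mul_gibbs_bondSpin ep x x b) (hint.const_mul _),
    integral_const_mul, integral_apply_mul_gibbs_bondSpin,
    integral_add hint (integrable_const 1)]
  simp only [integral_const, probReal_univ, one_smul]
  ring

end Nishimori

section Pressure

variable {V ι : Type*} [Fintype ι] (ep : ι → V × V)

theorem abs_potential_le (x j : ι → ℝ) (S : V → Bool) :
    |potential ep x j S| ≤ ∑ c, |x c| * |j c| :=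
  (Finset.abs_sum_le_sum_abs _ _).trans_eq
    (Finset.sum_congr rfl fun c _ => by rw [abs_mul, abs_mul, abs_bondSpin, mul_one])

theorem hasDerivAt_potential_update [DecidableEq ι] (x g : ι → ℝ) (b : ι) (S : V → Bool)
    (s : ℝ) :
    HasDerivAt (fun t => potential ep (Function.update x b t) (g + Function.update x b t) S)
      ((g b + 2 * s) * bondSpin ep S b) s := by
  have hsplit : (fun t => potential ep (Function.update x b t) (g + Function.update x b t) S)
      = fun t => t * (g b + t) * bondSpin ep S b
          + ∑ c ∈ {b}ᶜ, x c * (g c + x c) * bondSpin ep S c := by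
    funext t
    rw [potential, Fintype.sum_eq_add_sum_compl b]
    simp only [Pi.add_apply, Function.update_self]
    congr 1
    refine Finset.sum_congr rfl fun c hc => ?_
    rw [Function.update_of_ne (by simpa using hc)]
  rw [hsplit]
  refine ((((hasDerivAt_id' s).mul ((hasDerivAt_id' s).const_add (g b))).mul_const _).add_const
    _).congr_deriv ?_
  ring

variable [Fintype V] [DecidableEq V]

theorem hasDerivAt_log_partitionFn {x' j' : ℝ → ι → ℝ} {s : ℝ} {U' : (V → Bool) → ℝ}
    (hU : ∀ S, HasDerivAt (fun t => potential ep (x' t) (j' t) S) (U' S) s) :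
    HasDerivAt (fun t => Real.log (partitionFn ep (x' t) (j' t)))
      (gibbs ep (x' s) (j' s) U') s :=
  (HasDerivAt.fun_sum fun S _ => ((hU S).exp).congr_deriv (mul_comm _ _)).log
    (partitionFn_pos ep _ _).ne'

theorem hasDerivAt_log_partitionFn_update [DecidableEq ι] (x g : ι → ℝ) (b : ι) (s : ℝ) :
    HasDerivAt
      (fun t => Real.log (partitionFn ep (Function.update x b t) (g + Function.update x b t)))
      ((g b + 2 * s) * gibbs ep (Function.update x b s) (g + Function.update x b s)
        (bondSpin ep · b)) s := by
  rw [← gibbs_const_mul]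
  exact hasDerivAt_log_partitionFn ep fun S => hasDerivAt_potential_update ep x g b S s

theorem integrable_log_partitionFn (x y : ι → ℝ) :
    Integrable (fun j => Real.log (partitionFn ep x j)) (couplings y) :=
  ((integrable_const _).add (integrable_finsetSum _ fun c _ =>
    (integrable_apply_couplings y c).abs.const_mul |x c|)).mono'
    (continuous_log_partitionFn ep x).aestronglyMeasurable (ae_of_all _ fun j => by
      simpa only [Real.norm_eq_abs, Pi.add_apply, partitionFn] using
        Real.abs_log_sum_exp_le _ (abs_potential_le ep x j))

theorem pressure_eq_integral_add (y : ι → ℝ) :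
    pressure ep y = ∫ g, Real.log (partitionFn ep y (g + y)) ∂couplings 0 :=
  integral_couplings_eq_integral_add y (continuous_log_partitionFn ep y).aestronglyMeasurable

theorem hasDerivAt_pressure_update [DecidableEq ι] (x : ι → ℝ) (b : ι) :
    HasDerivAt (fun s => pressure ep (Function.update x b s))
      (∫ j, (j b + x b) * gibbs ep x j (bondSpin ep · b) ∂couplings x) (x b) := by
  set F : ℝ → (ι → ℝ) → ℝ := fun s g =>
    Real.log (partitionFn ep (Function.update x b s) (g + Function.update x b s))
  set F' : ℝ → (ι → ℝ) → ℝ := fun s g =>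
    (g b + 2 * s) * gibbs ep (Function.update x b s) (g + Function.update x b s) (bondSpin ep · b)
  have hF_meas (s : ℝ) : AEStronglyMeasurable (F s) (couplings 0) :=
    ((continuous_log_partitionFn ep _).comp (continuous_add_const _)).aestronglyMeasurable
  have hF_int : Integrable (F (x b)) (couplings 0) := by
    simpa only [F, Function.update_eq_self] using
      integrable_comp_add_couplings (integrable_log_partitionFn ep x x)
  have hF'_meas : AEStronglyMeasurable (F' (x b)) (couplings 0) :=
    (((continuous_apply b).add continuous_const).mul
      ((continuous_gibbs ep _ _).comp (continuous_add_const _))).aestronglyMeasurable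
  have h_bound (g : ι → ℝ) (s : ℝ) (hs : s ∈ Metric.ball (x b) 1) :
      ‖F' s g‖ ≤ |g b| + 2 * (|x b| + 1) := by
    rw [Metric.mem_ball, Real.dist_eq] at hs
    rw [Real.norm_eq_abs, abs_mul]
    calc _ ≤ |g b + 2 * s| := mul_le_of_le_one_right (abs_nonneg _) (abs_gibbs_bondSpin_le ep _ _ b)
      _ ≤ |g b| + 2 * |s| := by simpa [abs_mul] using abs_add_le (g b) (2 * s)
      _ ≤ _ := by linarith [abs_sub_abs_le_abs_sub s (x b)]
  obtain ⟨-, hderiv⟩ := hasDerivAt_integral_of_dominated_loc_of_deriv_le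
    (Metric.ball_mem_nhds (x b) one_pos) (.of_forall hF_meas) hF_int hF'_meas
    (ae_of_all _ h_bound)
    (((integrable_apply_couplings 0 b).abs.add (integrable_const _)))
    (ae_of_all _ fun g s _ => hasDerivAt_log_partitionFn_update ep x g b s)
  have hvalue : ∫ g, F' (x b) g ∂couplings 0
      = ∫ j, (j b + x b) * gibbs ep x j (bondSpin ep · b) ∂couplings x := by
    have hcont : Continuous fun j : ι → ℝ => (j b + x b) * gibbs ep x j (bondSpin ep · b) :=
      ((continuous_apply b).add continuous_const).mul (continuous_gibbs ep x _)
    rw [integral_couplings_eq_integral_add x hcont.aestronglyMeasurable]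
    simp only [F', Function.update_eq_self, Pi.add_apply]
    congr with g
    ring
  rw [← hvalue]
  exact hderiv.congr_of_eventuallyEq (.of_forall fun s => pressure_eq_integral_add ep _)

end Pressure

theorem griffiths_first_inequality_general
    {V ι : Type*} [Fintype V] [DecidableEq V] [Fintype ι] [DecidableEq ι]
    (ep : ι → V × V)
    (x : ι → ℝ) (hx : ∀ b, 0 ≤ x b) (b : ι) :
    HasDerivAt (fun s => pressure ep (Function.update x b s))
      (x b * quenched x (fun j => gibbs ep x j (fun S => bondSpin ep S b + 1))) (x b) ∧
    0 ≤ x b * quenched x (fun j => gibbs ep x j (fun S => bondSpin ep S b + 1)) ∧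
    MonotoneOn (fun s => pressure ep (Function.update x b s)) (Set.Ici (0 : ℝ)) := by
  have hderiv (y : ι → ℝ) : HasDerivAt (fun s => pressure ep (Function.update y b s))
      (y b * quenched y (fun j => gibbs ep y j (fun S => bondSpin ep S b + 1))) (y b) :=
    integral_apply_add_mul_gibbs_bondSpin ep y b ▸ hasDerivAt_pressure_update ep y b
  have hquenched_nonneg (y : ι → ℝ) :
      0 ≤ quenched y (fun j => gibbs ep y j (fun S => bondSpin ep S b + 1)) :=
    integral_nonneg fun j => gibbs_nonneg ep y j fun S =>
      neg_le_iff_add_nonneg.1 (neg_le_of_abs_le (abs_bondSpin ep S b).le)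
  have hderiv_update (s : ℝ) : HasDerivAt (fun t => pressure ep (Function.update x b t))
      (s * quenched (Function.update x b s) fun j =>
        gibbs ep (Function.update x b s) j fun S => bondSpin ep S b + 1) s := by
    simpa only [Function.update_idem, Function.update_self] using
      hderiv (Function.update x b s)
  refine ⟨hderiv x, mul_nonneg (hx b) (hquenched_nonneg x), ?_⟩
  refine monotoneOn_of_deriv_nonneg (convex_Ici 0)
    (fun s _ => (hderiv_update s).continuousAt.continuousWithinAt)
    (fun s _ => (hderiv_update s).differentiableAt.differentiableWithinAt) fun s hs => ?_
  rw [(hderiv_update s).deriv]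
  exact mul_nonneg (interior_subset hs) (hquenched_nonneg _)

/-- First Griffiths-type inequality on the Nishimori line: the quenched
pressure is differentiable in each parameter `x_b` (total derivative: the parameter enters
both the Gaussian mean and the potential), with
`dP/dx_b = x_b [⟨S_b + 1⟩] ≥ 0`; in particular `P` is nondecreasing in each `x_b`. -/
theorem griffiths_first_inequality
    {V ι : Type*} [Fintype V] [DecidableEq V] [Fintype ι] [DecidableEq ι]
    (ep : ι → V × V) (hep : ∀ b, (ep b).1 ≠ (ep b).2)
    (x : ι → ℝ) (hx : ∀ b, 0 ≤ x b) (b : ι) :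
    HasDerivAt (fun s => pressure ep (Function.update x b s))
      (x b * quenched x (fun j => gibbs ep x j (fun S => bondSpin ep S b + 1))) (x b) ∧
    0 ≤ x b * quenched x (fun j => gibbs ep x j (fun S => bondSpin ep S b + 1)) ∧
    MonotoneOn (fun s => pressure ep (Function.update x b s)) (Set.Ici (0 : ℝ)) :=
  griffiths_first_inequality_general ep x hx b

end
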